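/- arXiv:1211.1086 — 2 statements merged into one kernel-verified Lean document; each statement's English description precedes it below -/
import Mathlib

section
/- Let Γ be a finitely generated group of C¹ diffeomorphisms of [0,1] with uniform exponential growth ω(Γ) ≥ ω > 1. There exists ε > 0 (depending only on ω) such that if Γ is generated by diffeomorphisms f with sup_x|f(x)−x| + sup_x|f'(x)−1| < ε, then Γ is not C₀-strongly discrete: for every x₀ ∈ (0,1) and every C > 0 there exists g ∈ Γ \ {1} with |g(x₀) − x₀| ≤ C. -/
/-- The ball of radius n in the Cayley graph of a group w.r.t. a finite set S. -/
def wordBall {Γ : Type} [Group Γ] (S : Finset Γ) (n : ℕ) : Set Γ :=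
  {g | ∃ l : List Γ, l.length ≤ n ∧ (∀ s ∈ l, s ∈ S) ∧ l.prod = g}

/-- `growthGE Γ ω` says that the uniform exponential growth rate ω(Γ) is at
least ω: for every finite symmetric generating set S and every c with
1 ≤ c < ω, eventually the balls satisfy |B_n| > c^n. -/
def growthGE (Γ : Type) [Group Γ] (ω : ℝ) : Prop :=
  ∀ S : Finset Γ, (∀ s ∈ S, s⁻¹ ∈ S) → Subgroup.closure (S : Set Γ) = ⊤ →
    ∀ c : ℝ, 1 ≤ c → c < ω → ∃ N : ℕ, ∀ n : ℕ, N ≤ n →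
      c ^ n < ((wordBall S n).ncard : ℝ)

/-- The C¹ distance of a permutation of ℝ from the identity, on [0,1]. -/
noncomputable def d₁id (f : Equiv.Perm ℝ) : ℝ :=
  (⨆ x : Set.Icc (0:ℝ) 1, |f x - x|) + (⨆ x : Set.Icc (0:ℝ) 1, |deriv (fun y => f y) x - 1|)

lemma gen_lipschitz (f : Equiv.Perm ℝ) (ε : ℝ) (hε : 0 < ε)
    (hcd : ContDiffOn ℝ 1 (fun x => f x) (Set.Icc 0 1))
    (hd : d₁id f < ε) :
    LipschitzOnWith (1 + ε).toNNReal (fun x => f x) (Set.Icc 0 1) := by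
  set F : ℝ → ℝ := fun x => f x with hF
  set g : ℝ → ℝ := derivWithin F (Set.Icc 0 1) with hg
  have hgcont : ContinuousOn g (Set.Icc 0 1) :=
    hcd.continuousOn_derivWithin (uniqueDiffOn_Icc one_pos) le_rfl
  obtain ⟨M, hM⟩ := (isCompact_Icc).exists_bound_of_continuousOn hgcont
  have hio : ∀ x ∈ Set.Ioo (0:ℝ) 1, deriv F x = g x := by
    intro x hx
    exact (derivWithin_of_mem_nhds (Icc_mem_nhds hx.1 hx.2)).symm
  have hcases : ∀ x ∈ Set.Icc (0:ℝ) 1, x ∈ Set.Ioo (0:ℝ) 1 ∨ x = 0 ∨ x = 1 := by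
    intro x hx
    rcases eq_or_lt_of_le hx.1 with h0 | h0
    · exact Or.inr (Or.inl h0.symm)
    rcases eq_or_lt_of_le hx.2 with h1 | h1
    · exact Or.inr (Or.inr h1)
    exact Or.inl ⟨h0, h1⟩
  have hbdd : BddAbove (Set.range fun x : Set.Icc (0:ℝ) 1 => |deriv F x - 1|) := by
    refine ⟨max (M + 1) (max (|deriv F 0 - 1|) (|deriv F 1 - 1|)), ?_⟩
    rintro y ⟨⟨x, hx⟩, rfl⟩
    rcases hcases x hx with h | h | h
    · have := hM x (Set.Ioo_subset_Icc_self h)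
      rw [Real.norm_eq_abs] at this
      have h2 : |deriv F x - 1| ≤ |g x| + 1 := by
        rw [hio x h]
        have := abs_sub (g x) 1
        simpa using this
      exact le_trans h2 (le_max_of_le_left (by linarith))
    · subst h; exact le_max_of_le_right (le_max_left _ _)
    · subst h; exact le_max_of_le_right (le_max_right _ _)
  have hA : 0 ≤ (⨆ x : Set.Icc (0:ℝ) 1, |f x - x|) :=
    Real.iSup_nonneg fun x => abs_nonneg _
  have hB : (⨆ x : Set.Icc (0:ℝ) 1, |deriv F x - 1|) < ε := by
    simp only [d₁id] at hd
    linarith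
  have hpt : ∀ x ∈ Set.Icc (0:ℝ) 1, |deriv F x - 1| < ε := by
    intro x hx
    exact lt_of_le_of_lt (le_ciSup hbdd (⟨x, hx⟩ : Set.Icc (0:ℝ) 1)) hB
  have hIoo : ∀ x ∈ Set.Ioo (0:ℝ) 1, |g x| ≤ 1 + ε := by
    intro x hx
    have h1 := hpt x (Set.Ioo_subset_Icc_self hx)
    rw [hio x hx] at h1
    have h2 : |g x| = |(g x - 1) + 1| := by ring_nf
    have h3 := abs_add_le (g x - 1) 1
    rw [h2]
    simp only [abs_one] at h3
    linarith
  have hIcc : ∀ x ∈ Set.Icc (0:ℝ) 1, |g x| ≤ 1 + ε := by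
    intro x hx
    have h1 : ContinuousWithinAt g (Set.Ioo 0 1) x :=
      (hgcont x hx).mono Set.Ioo_subset_Icc_self
    have h2 : x ∈ closure (Set.Ioo (0:ℝ) 1) := by
      rw [closure_Ioo (zero_ne_one)]; exact hx
    have h3 : g x ∈ closure (g '' Set.Ioo 0 1) := h1.mem_closure_image h2
    have h4 : IsClosed {y : ℝ | |y| ≤ 1 + ε} := isClosed_le continuous_abs continuous_const
    have h5 : g '' Set.Ioo 0 1 ⊆ {y : ℝ | |y| ≤ 1 + ε} := by
      rintro y ⟨z, hz, rfl⟩; exact hIoo z hz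
    exact h4.closure_subset ((closure_mono h5).trans (by rw [h4.closure_eq]) h3)
  refine (convex_Icc (0:ℝ) 1).lipschitzOnWith_of_nnnorm_derivWithin_le
    (hcd.differentiableOn one_ne_zero) ?_
  intro x hx
  rw [← NNReal.coe_le_coe, coe_nnnorm, Real.coe_toNNReal _ (by linarith), Real.norm_eq_abs]
  exact hIcc x hx

lemma word_lip {Γ : Type} [Group Γ] (ρ : Γ →* Equiv.Perm ℝ) (K : NNReal)
    (S : Finset Γ)
    (hmaps : ∀ g : Γ, Set.MapsTo (ρ g) (Set.Icc 0 1) (Set.Icc 0 1))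
    (hlip : ∀ s ∈ S, LipschitzOnWith K (fun x => ρ s x) (Set.Icc 0 1)) :
    ∀ l : List Γ, (∀ s ∈ l, s ∈ S) →
      LipschitzOnWith (K ^ l.length) (fun x => ρ l.prod x) (Set.Icc 0 1) := by
  intro l
  induction l with
  | nil =>
    intro _
    simp only [List.prod_nil, map_one, List.length_nil, pow_zero]
    have : (fun x => (1 : Equiv.Perm ℝ) x) = fun x : ℝ => x := by
      funext x; simp
    rw [this]
    exact LipschitzWith.id.lipschitzOnWith
  | cons a l ih =>
    intro hmem
    have ha : a ∈ S := hmem a List.mem_cons_self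
    have hl : ∀ s ∈ l, s ∈ S := fun s hs => hmem s (List.mem_cons_of_mem a hs)
    have h1 : (fun x => ρ (a :: l).prod x) =
        (fun x => ρ a x) ∘ (fun x => ρ l.prod x) := by
      funext x; simp [List.prod_cons, map_mul]
    rw [h1, List.length_cons, pow_succ']
    exact (hlip a ha).comp (ih hl) (hmaps l.prod)


set_option maxHeartbeats 1000000 in
/-- Theorem 1 of the paper: for every ω > 1 there is ε > 0
such that no finitely generated group Γ of orientation-preserving C¹
diffeomorphisms of [0,1] with ω(Γ) ≥ ω that is generated by elements
ε-close to the identity in the C¹ metric is C₀-strongly discrete. -/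
theorem stmt_12 (ω : ℝ) (hω : 1 < ω) :
    ∃ ε > (0:ℝ), ∀ (Γ : Type) [inst : Group Γ], ∀ (ρ : Γ →* Equiv.Perm ℝ) (S : Finset Γ),
      Function.Injective ρ →
      (∀ s ∈ S, s⁻¹ ∈ S) → Subgroup.closure (S : Set Γ) = ⊤ →
      growthGE Γ ω →
      (∀ g : Γ, ContDiffOn ℝ 1 (fun x => ρ g x) (Set.Icc 0 1) ∧
        Set.BijOn (ρ g) (Set.Icc 0 1) (Set.Icc 0 1) ∧
        StrictMonoOn (ρ g) (Set.Icc 0 1) ∧ ∀ x ∉ Set.Icc (0:ℝ) 1, ρ g x = x) →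
      (∀ s ∈ S, d₁id (ρ s) < ε) →
      ∀ x₀ ∈ Set.Ioo (0:ℝ) 1, ∀ C > (0:ℝ), ∃ g : Γ, g ≠ 1 ∧ |ρ g x₀ - x₀| ≤ C := by
  set c : ℝ := (ω + 1) / 2 with hcdef
  have hc1 : 1 < c := by rw [hcdef]; linarith
  have hcω : c < ω := by rw [hcdef]; linarith
  have hc0 : (0:ℝ) ≤ c := by linarith
  set t0 : ℝ := Real.sqrt c with ht0def
  have ht1 : 1 < t0 := by
    have h := Real.sqrt_lt_sqrt (by norm_num : (0:ℝ) ≤ 1) hc1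
    simpa using h
  have ht2 : t0 ^ 2 = c := Real.sq_sqrt hc0
  refine ⟨t0 - 1, by linarith, ?_⟩
  intro Γ inst ρ S hinj hsym hgen hgrow hdiff hnear x₀ hx₀ C hC
  have hx₀I : x₀ ∈ Set.Icc (0:ℝ) 1 := ⟨hx₀.1.le, hx₀.2.le⟩
  by_cases hstab : ∃ g : Γ, g ≠ 1 ∧ ρ g x₀ = x₀
  · obtain ⟨g, hg1, hg2⟩ := hstab
    exact ⟨g, hg1, by rw [hg2]; simpa using hC.le⟩
  push_neg at hstab
  have hε : (0:ℝ) < t0 - 1 := by linarith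
  set K : NNReal := t0.toNNReal with hKdef
  have hKc : (K : ℝ) = t0 := Real.coe_toNNReal _ (by linarith)
  have hmaps : ∀ g : Γ, Set.MapsTo (ρ g) (Set.Icc 0 1) (Set.Icc 0 1) :=
    fun g => (hdiff g).2.1.mapsTo
  have hlip : ∀ s ∈ S, LipschitzOnWith K (fun x => ρ s x) (Set.Icc 0 1) := by
    intro s hs
    have h := gen_lipschitz (ρ s) (t0 - 1) hε (hdiff s).1 (hnear s hs)
    have he : (1 + (t0 - 1)) = t0 := by ring
    rwa [he] at h
  obtain ⟨N, hN⟩ := hgrow S hsym hgen c hc1.le hcω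
  obtain ⟨n₁, hn₁⟩ := pow_unbounded_of_one_lt (2 / C) ht1
  obtain ⟨n₂, hn₂⟩ := pow_unbounded_of_one_lt (4:ℝ) hc1
  set n : ℕ := max N (max n₁ n₂) with hndef
  have hcn4 : (4:ℝ) < c ^ n :=
    lt_of_lt_of_le hn₂ (pow_le_pow_right₀ hc1.le ((le_max_right n₁ n₂).trans (le_max_right _ _)))
  have htn : 2 / C < t0 ^ n :=
    lt_of_lt_of_le hn₁ (pow_le_pow_right₀ ht1.le ((le_max_left n₁ n₂).trans (le_max_right _ _)))
  have hball := hN n (le_max_left _ _)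
  set B : Set Γ := wordBall S n with hBdef
  have hposc : (0:ℝ) < c ^ n := pow_pos (by linarith) n
  have hfin : B.Finite := by
    by_contra h
    rw [Set.Infinite.ncard h] at hball
    simp only [Nat.cast_zero] at hball
    linarith
  set Fs : Finset Γ := hfin.toFinset with hFsdef
  have hcard : Fs.card = B.ncard := (Set.ncard_eq_toFinset_card B hfin).symm
  set k : ℕ := ⌊c ^ n⌋₊ - 1 with hkdef
  have hfl4 : 4 ≤ ⌊c ^ n⌋₊ := Nat.le_floor (by exact_mod_cast hcn4.le)
  have hk1 : 1 ≤ k := by omega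
  have hkfl : k + 1 = ⌊c ^ n⌋₊ := by omega
  have hkr : c ^ n - 2 ≤ (k:ℝ) := by
    have h1 : c ^ n < ⌊c ^ n⌋₊ + 1 := Nat.lt_floor_add_one _
    have h2 : (k:ℝ) = (⌊c ^ n⌋₊ : ℝ) - 1 := by
      have : (k:ℕ) + 1 = ⌊c ^ n⌋₊ := hkfl
      have h3 : ((k:ℕ):ℝ) + 1 = (⌊c ^ n⌋₊ : ℝ) := by exact_mod_cast congrArg Nat.cast this
      linarith
    linarith
  have hk0 : (0:ℝ) < (k:ℝ) := by linarith
  have hcard_lt : (Finset.range (k + 1)).card < Fs.card := by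
    rw [Finset.card_range, hcard, hkfl]
    have h1 : (⌊c ^ n⌋₊ : ℝ) ≤ c ^ n := Nat.floor_le hposc.le
    have h2 : (⌊c ^ n⌋₊ : ℝ) < (B.ncard : ℝ) := lt_of_le_of_lt h1 hball
    exact_mod_cast h2
  have hmapsb : ∀ g ∈ Fs, ⌊(ρ g x₀) * k⌋₊ ∈ Finset.range (k + 1) := by
    intro g _
    have hgx : ρ g x₀ ∈ Set.Icc (0:ℝ) 1 := hmaps g hx₀I
    have h1 : (ρ g x₀) * k ≤ (k:ℝ) := by nlinarith [hgx.2]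
    rw [Finset.mem_range, Nat.lt_succ_iff]
    calc ⌊(ρ g x₀) * k⌋₊ ≤ ⌊(k:ℝ)⌋₊ := Nat.floor_mono h1
      _ = k := Nat.floor_natCast k
  obtain ⟨g, hgF, h, hhF, hgh, hfloor⟩ :=
    Finset.exists_ne_map_eq_of_card_lt_of_maps_to hcard_lt hmapsb
  set u : ℝ := ρ g x₀ with hudef
  set v : ℝ := ρ h x₀ with hvdef
  have huI : u ∈ Set.Icc (0:ℝ) 1 := hmaps g hx₀I
  have hvI : v ∈ Set.Icc (0:ℝ) 1 := hmaps h hx₀I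
  have hcloseuv : |u - v| ≤ 1 / k := by
    have hu0 : 0 ≤ u * k := mul_nonneg huI.1 hk0.le
    have hv0 : 0 ≤ v * k := mul_nonneg hvI.1 hk0.le
    have h1 : (⌊u * k⌋₊ : ℝ) ≤ u * k := Nat.floor_le hu0
    have h2 : u * k < ⌊u * k⌋₊ + 1 := Nat.lt_floor_add_one _
    have h3 : (⌊v * k⌋₊ : ℝ) ≤ v * k := Nat.floor_le hv0
    have h4 : v * k < ⌊v * k⌋₊ + 1 := Nat.lt_floor_add_one _
    have h5 : (⌊u * k⌋₊ : ℝ) = (⌊v * k⌋₊ : ℝ) := by exact_mod_cast congrArg Nat.cast hfloor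
    have h6 : |(u - v) * k| ≤ 1 := by
      rw [abs_le]; constructor <;> nlinarith
    rw [abs_mul, abs_of_nonneg hk0.le] at h6
    rw [le_div_iff₀ hk0]
    exact h6
  -- word for g⁻¹
  have hgB : g ∈ B := hfin.mem_toFinset.mp hgF
  obtain ⟨l, hlen, hmem, hprod⟩ := hgB
  set l' : List Γ := (l.map fun x => x⁻¹).reverse with hl'def
  have hlen' : l'.length = l.length := by simp [hl'def]
  have hmem' : ∀ s ∈ l', s ∈ S := by
    intro s hs
    rw [hl'def, List.mem_reverse, List.mem_map] at hs
    obtain ⟨a, ha, rfl⟩ := hs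
    exact hsym a (hmem a ha)
  have hprod' : l'.prod = g⁻¹ := by
    rw [hl'def, ← List.prod_inv_reverse, hprod]
  have hlipw := word_lip ρ K S hmaps hlip l' hmem'
  rw [hprod'] at hlipw
  -- the element
  refine ⟨g⁻¹ * h, ?_, ?_⟩
  · intro habs
    exact hgh (inv_mul_eq_one.mp habs)
  · have hx1 : (fun x => ρ g⁻¹ x) u = x₀ := by
      simp only [hudef]
      rw [← Equiv.Perm.mul_apply, ← map_mul, inv_mul_cancel, map_one, Equiv.Perm.one_apply]
    have hx2 : (fun x => ρ g⁻¹ x) v = ρ (g⁻¹ * h) x₀ := by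
      simp only [hvdef]
      rw [map_mul, Equiv.Perm.mul_apply]
    have hd := hlipw.dist_le_mul v hvI u huI
    beta_reduce at hx1 hx2
    rw [hx1, hx2] at hd
    rw [Real.dist_eq, Real.dist_eq] at hd
    have hcoe : ((K ^ l'.length : NNReal) : ℝ) = t0 ^ l'.length := by
      push_cast [hKc]
      ring
    rw [hcoe] at hd
    have hpowle : t0 ^ l'.length ≤ t0 ^ n := by
      apply pow_le_pow_right₀ ht1.le
      rw [hlen']; exact hlen
    have habs : |v - u| ≤ 1 / k := by rwa [abs_sub_comm] at hcloseuv
    set t : ℝ := t0 ^ n with htdef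
    have ht0n : 0 < t := pow_pos (by linarith) n
    have htc : t ^ 2 = c ^ n := by
      rw [htdef, ← pow_mul, mul_comm, pow_mul, ht2]
    have hd2 : |ρ (g⁻¹ * h) x₀ - x₀| ≤ t * (1 / k) := by
      calc |ρ (g⁻¹ * h) x₀ - x₀| ≤ t0 ^ l'.length * |v - u| := hd
        _ ≤ t * (1 / k) := by
            apply mul_le_mul hpowle habs (abs_nonneg _) ht0n.le
    have hfinal : t * (1 / k) ≤ C := by
      have h2k : t ^ 2 ≤ 2 * k := by nlinarith
      have hCt : 2 < C * t := by
        rw [div_lt_iff₀ hC] at htn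
        linarith [htn]
      have h7 : t ≤ C * k := by nlinarith
      calc t * (1 / k) = t / k := by ring
        _ ≤ C := by rw [div_le_iff₀ hk0]; nlinarith
    linarith
end

section
/- Let Γ be a finitely generated group of C² diffeomorphisms of [0,1] with uniform exponential growth ω(Γ) ≥ ω > 1. There exists ε > 0 (depending only on ω) such that if Γ is generated by elements in the ε-ball around the identity in the C¹ metric, then Γ is not strongly discrete: for every x₀ ∈ (0,1) and every C > 0 there exists g ∈ Γ \ {1} with |g'(x₀) − 1| ≤ C. -/
set_option maxHeartbeats 1600000


lemma sd_fixed {f : ℝ → ℝ} (hb : Set.BijOn f (Set.Icc 0 1) (Set.Icc 0 1))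
    (hm : StrictMonoOn f (Set.Icc 0 1)) :
    f 0 = 0 ∧ f 1 = 1 ∧ Set.MapsTo f (Set.Ioo 0 1) (Set.Ioo 0 1) := by
  have h0I : (0:ℝ) ∈ Set.Icc (0:ℝ) 1 := by norm_num
  have h1I : (1:ℝ) ∈ Set.Icc (0:ℝ) 1 := by norm_num
  have h0 : f 0 = 0 := by
    have hf0 : f 0 ∈ Set.Icc (0:ℝ) 1 := hb.mapsTo h0I
    obtain ⟨y, hy, hfy⟩ := hb.surjOn h0I
    rcases eq_or_lt_of_le hy.1 with h | h
    · rw [← h] at hfy; exact hfy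
    · have := hm h0I hy h
      rw [hfy] at this
      linarith [hf0.1]
  have h1 : f 1 = 1 := by
    have hf1 : f 1 ∈ Set.Icc (0:ℝ) 1 := hb.mapsTo h1I
    obtain ⟨y, hy, hfy⟩ := hb.surjOn h1I
    rcases eq_or_lt_of_le hy.2 with h | h
    · rw [h] at hfy; exact hfy
    · have := hm hy h1I h
      rw [hfy] at this
      linarith [hf1.2]
  refine ⟨h0, h1, fun x hx => ?_⟩
  have hxI : x ∈ Set.Icc (0:ℝ) 1 := ⟨le_of_lt hx.1, le_of_lt hx.2⟩
  constructor
  · have := hm h0I hxI hx.1; rwa [h0] at this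
  · have := hm hxI h1I hx.2; rwa [h1] at this

lemma sd_hasDerivAt {f : ℝ → ℝ} (hc : ContDiffOn ℝ 2 f (Set.Icc 0 1))
    {x : ℝ} (hx : x ∈ Set.Ioo (0:ℝ) 1) :
    HasDerivAt f (deriv f x) x := by
  have hxI : x ∈ Set.Icc (0:ℝ) 1 := ⟨le_of_lt hx.1, le_of_lt hx.2⟩
  have hmem : Set.Icc (0:ℝ) 1 ∈ nhds x := Icc_mem_nhds hx.1 hx.2
  have hdw : DifferentiableWithinAt ℝ f (Set.Icc 0 1) x :=
    (hc.differentiableOn (by norm_num)) x hxI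
  exact (hdw.differentiableAt hmem).hasDerivAt

lemma sd_deriv_eq {f : ℝ → ℝ} {x : ℝ} (hx : x ∈ Set.Ioo (0:ℝ) 1) :
    deriv f x = derivWithin f (Set.Icc 0 1) x :=
  (derivWithin_of_mem_nhds (Icc_mem_nhds hx.1 hx.2)).symm

lemma sd_dist_bounds (f : Equiv.Perm ℝ)
    (hc : ContDiffOn ℝ 2 (fun x => f x) (Set.Icc 0 1))
    (hb : Set.BijOn f (Set.Icc 0 1) (Set.Icc 0 1)) :
    (∀ x ∈ Set.Icc (0:ℝ) 1, |f x - x| ≤ d₁id f) ∧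
    (∀ x ∈ Set.Ioo (0:ℝ) 1, |deriv (fun y => f y) x - 1| ≤ d₁id f) := by
  have hbdd1 : BddAbove (Set.range fun p : Set.Icc (0:ℝ) 1 => |f p - (p:ℝ)|) := by
    refine ⟨1, fun y hy => ?_⟩
    obtain ⟨p, rfl⟩ := hy
    have h1 : f p ∈ Set.Icc (0:ℝ) 1 := hb.mapsTo p.2
    have h2 := p.2
    rw [abs_sub_le_iff]
    constructor <;> [skip; skip] <;>
      simp only [Set.mem_Icc] at h1 h2 <;> linarith
  -- bound for the derivative part
  have hφc : ContinuousOn (derivWithin (fun y => f y) (Set.Icc 0 1)) (Set.Icc 0 1) :=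
    hc.continuousOn_derivWithin (uniqueDiffOn_Icc one_pos) (by norm_num)
  obtain ⟨M, hM⟩ : ∃ M, ∀ y ∈ Set.Icc (0:ℝ) 1,
      |derivWithin (fun y => f y) (Set.Icc 0 1) y - 1| ≤ M := by
    have hcomp : IsCompact (Set.Icc (0:ℝ) 1) := isCompact_Icc
    have hcont : ContinuousOn (fun y => |derivWithin (fun y => f y) (Set.Icc 0 1) y - 1|)
        (Set.Icc 0 1) := (hφc.sub continuousOn_const).abs
    obtain ⟨M, hM⟩ := hcomp.bddAbove_image hcont
    exact ⟨M, fun y hy => hM (Set.mem_image_of_mem _ hy)⟩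
  have hbdd2 : BddAbove (Set.range fun p : Set.Icc (0:ℝ) 1 =>
      |deriv (fun y => f y) p - 1|) := by
    refine ⟨max M (max (|deriv (fun y => f y) 0 - 1|) (|deriv (fun y => f y) 1 - 1|)),
      fun y hy => ?_⟩
    obtain ⟨p, rfl⟩ := hy
    show |deriv (fun y => f y) (p:ℝ) - 1| ≤ _
    rcases eq_or_lt_of_le p.2.1 with h0 | h0
    · rw [← h0]
      exact le_max_of_le_right (le_max_left _ _)
    rcases eq_or_lt_of_le p.2.2 with h1 | h1
    · rw [h1]
      exact le_max_of_le_right (le_max_right _ _)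
    · have : deriv (fun y => f y) p = derivWithin (fun y => f y) (Set.Icc 0 1) p :=
        sd_deriv_eq ⟨h0, h1⟩
      rw [this]
      exact le_max_of_le_left (hM p p.2)
  have hnn1 : (0:ℝ) ≤ ⨆ x : Set.Icc (0:ℝ) 1, |f x - x| :=
    Real.iSup_nonneg fun p => abs_nonneg _
  have hnn2 : (0:ℝ) ≤ ⨆ x : Set.Icc (0:ℝ) 1, |deriv (fun y => f y) x - 1| :=
    Real.iSup_nonneg fun p => abs_nonneg _
  constructor
  · intro x hx
    have := le_ciSup hbdd1 (⟨x, hx⟩ : Set.Icc (0:ℝ) 1)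
    unfold d₁id
    simp only at this
    linarith
  · intro x hx
    have hxI : x ∈ Set.Icc (0:ℝ) 1 := ⟨le_of_lt hx.1, le_of_lt hx.2⟩
    have := le_ciSup hbdd2 (⟨x, hxI⟩ : Set.Icc (0:ℝ) 1)
    unfold d₁id
    simp only at this
    linarith

lemma sd_log_sub_le {a b : ℝ} (ha : 1/2 ≤ a) (hb : 1/2 ≤ b) (h : b ≤ a) :
    Real.log a - Real.log b ≤ 2 * (a - b) := by
  have hb0 : (0:ℝ) < b := by linarith
  have ha0 : (0:ℝ) < a := by linarith
  have h1 : Real.log a - Real.log b = Real.log (a / b) := (Real.log_div ha0.ne' hb0.ne').symm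
  have h2 : Real.log (a / b) ≤ a / b - 1 := Real.log_le_sub_one_of_pos (div_pos ha0 hb0)
  have h3 : a / b - 1 ≤ 2 * (a - b) := by
    rw [div_sub_one hb0.ne', div_le_iff₀ hb0]
    nlinarith
  linarith

lemma sd_log_lip {a b : ℝ} (ha : 1/2 ≤ a) (hb : 1/2 ≤ b) :
    |Real.log a - Real.log b| ≤ 2 * |a - b| := by
  have hb0 : (0:ℝ) < b := by linarith
  have ha0 : (0:ℝ) < a := by linarith
  rcases le_total b a with h | h
  · have hm : Real.log b ≤ Real.log a := Real.log_le_log hb0 h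
    rw [abs_of_nonneg (by linarith), abs_of_nonneg (by linarith)]
    exact sd_log_sub_le ha hb h
  · have hm : Real.log a ≤ Real.log b := Real.log_le_log ha0 h
    rw [abs_of_nonpos (by linarith), abs_of_nonpos (by linarith)]
    have := sd_log_sub_le hb ha h
    linarith

lemma sd_exists_lip {f : ℝ → ℝ} (hc : ContDiffOn ℝ 2 f (Set.Icc 0 1))
    (hlow : ∀ x ∈ Set.Ioo (0:ℝ) 1, 1/2 ≤ deriv f x) :
    ∃ L : ℝ, 0 ≤ L ∧ ∀ x ∈ Set.Ioo (0:ℝ) 1, ∀ y ∈ Set.Ioo (0:ℝ) 1,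
      |Real.log (deriv f x) - Real.log (deriv f y)| ≤ L * |x - y| := by
  have hUD : UniqueDiffOn ℝ (Set.Icc (0:ℝ) 1) := uniqueDiffOn_Icc one_pos
  have hφ1 : ContDiffOn ℝ 1 (derivWithin f (Set.Icc 0 1)) (Set.Icc 0 1) :=
    hc.derivWithin hUD (by norm_num)
  have hφd : DifferentiableOn ℝ (derivWithin f (Set.Icc 0 1)) (Set.Icc 0 1) :=
    hφ1.differentiableOn (by norm_num)
  have hψc : ContinuousOn
      (derivWithin (derivWithin f (Set.Icc 0 1)) (Set.Icc 0 1)) (Set.Icc 0 1) :=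
    hφ1.continuousOn_derivWithin hUD le_rfl
  obtain ⟨M, hM⟩ : ∃ M, ∀ y ∈ Set.Icc (0:ℝ) 1,
      ‖derivWithin (derivWithin f (Set.Icc 0 1)) (Set.Icc 0 1) y‖ ≤ M := by
    obtain ⟨M, hM⟩ := isCompact_Icc.bddAbove_image hψc.norm
    exact ⟨M, fun y hy => hM (Set.mem_image_of_mem _ hy)⟩
  have hM0 : (0:ℝ) ≤ M := le_trans (norm_nonneg _) (hM 0 (by norm_num))
  refine ⟨2 * M, by linarith, fun x hx y hy => ?_⟩
  have hxI : x ∈ Set.Icc (0:ℝ) 1 := ⟨le_of_lt hx.1, le_of_lt hx.2⟩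
  have hyI : y ∈ Set.Icc (0:ℝ) 1 := ⟨le_of_lt hy.1, le_of_lt hy.2⟩
  have hlip : ‖derivWithin f (Set.Icc 0 1) x - derivWithin f (Set.Icc 0 1) y‖ ≤ M * ‖x - y‖ :=
    (convex_Icc (0:ℝ) 1).norm_image_sub_le_of_norm_derivWithin_le hφd hM hyI hxI
  rw [sd_deriv_eq hx, sd_deriv_eq hy]
  calc |Real.log (derivWithin f (Set.Icc 0 1) x) - Real.log (derivWithin f (Set.Icc 0 1) y)|
      ≤ 2 * |derivWithin f (Set.Icc 0 1) x - derivWithin f (Set.Icc 0 1) y| := by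
        apply sd_log_lip
        · rw [← sd_deriv_eq hx]; exact hlow x hx
        · rw [← sd_deriv_eq hy]; exact hlow y hy
    _ ≤ 2 * (M * |x - y|) := by
        rw [Real.norm_eq_abs, Real.norm_eq_abs] at hlip
        linarith [abs_nonneg (derivWithin f (Set.Icc 0 1) x - derivWithin f (Set.Icc 0 1) y)]
    _ = 2 * M * |x - y| := by ring

lemma sd_toNat_le {z : ℤ} {r : ℝ} (h : (z:ℝ) ≤ r) (hr : 0 ≤ r) :
    ((z.toNat : ℕ) : ℝ) ≤ r := by
  rcases le_or_gt z 0 with hz | hz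
  · rw [Int.toNat_of_nonpos hz]
    simpa using hr
  · have e : ((z.toNat : ℕ) : ℝ) = ((z : ℤ) : ℝ) := by
      exact_mod_cast congrArg (fun t : ℤ => (t : ℝ)) (Int.toNat_of_nonneg hz.le)
    rw [e]
    exact h

/-- Theorem 1 of the paper: for every ω > 1 there is ε > 0
such that no finitely generated group Γ of orientation-preserving C²
diffeomorphisms of [0,1] with ω(Γ) ≥ ω that is generated by elements
ε-close to the identity in the C¹ metric is strongly discrete. -/
theorem stmt_13 (ω : ℝ) (hω : 1 < ω) :
    ∃ ε > (0:ℝ), ∀ (Γ : Type) [inst : Group Γ], ∀ (ρ : Γ →* Equiv.Perm ℝ) (S : Finset Γ),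
      Function.Injective ρ →
      (∀ s ∈ S, s⁻¹ ∈ S) → Subgroup.closure (S : Set Γ) = ⊤ →
      growthGE Γ ω →
      (∀ g : Γ, ContDiffOn ℝ 2 (fun x => ρ g x) (Set.Icc 0 1) ∧
        Set.BijOn (ρ g) (Set.Icc 0 1) (Set.Icc 0 1) ∧
        StrictMonoOn (ρ g) (Set.Icc 0 1) ∧ ∀ x ∉ Set.Icc (0:ℝ) 1, ρ g x = x) →
      (∀ s ∈ S, d₁id (ρ s) < ε) →
      ∀ x₀ ∈ Set.Ioo (0:ℝ) 1, ∀ C > (0:ℝ), ∃ g : Γ, g ≠ 1 ∧ |deriv (fun y => ρ g y) x₀ - 1| ≤ C := by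
  set ε : ℝ := min ((ω - 1)/4) (1/8) with hεdef
  have hεpos : 0 < ε := lt_min (by linarith) (by norm_num)
  have hε8 : ε ≤ 1/8 := min_le_right _ _
  have hεω : ε ≤ (ω - 1)/4 := min_le_left _ _
  refine ⟨ε, hεpos, ?_⟩
  intro Γ inst ρ S hinj hsym hgen hgrowth Hall hclose x₀ hx₀ C hC
  by_contra hcon
  push_neg at hcon
  -- hcon : ∀ g, g ≠ 1 → C < |deriv (fun y => ρ g y) x₀ - 1|
  -- basic facts
  have hmapJ : ∀ g : Γ, Set.MapsTo (fun x => ρ g x) (Set.Ioo 0 1) (Set.Ioo 0 1) :=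
    fun g => (sd_fixed (Hall g).2.1 (Hall g).2.2.1).2.2
  have hDa : ∀ g : Γ, ∀ x ∈ Set.Ioo (0:ℝ) 1,
      HasDerivAt (fun y => ρ g y) (deriv (fun y => ρ g y) x) x :=
    fun g x hx => sd_hasDerivAt (Hall g).1 hx
  have hgm : ∀ s ∈ S, ∀ x ∈ Set.Icc (0:ℝ) 1, |ρ s x - x| < ε := by
    intro s hs x hx
    exact lt_of_le_of_lt ((sd_dist_bounds (ρ s) (Hall s).1 (Hall s).2.1).1 x hx) (hclose s hs)
  have hgd : ∀ s ∈ S, ∀ x ∈ Set.Ioo (0:ℝ) 1, |deriv (fun y => ρ s y) x - 1| < ε := by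
    intro s hs x hx
    exact lt_of_le_of_lt ((sd_dist_bounds (ρ s) (Hall s).1 (Hall s).2.1).2 x hx) (hclose s hs)
  have hglow : ∀ s ∈ S, ∀ x ∈ Set.Ioo (0:ℝ) 1,
      1 - ε ≤ deriv (fun y => ρ s y) x ∧ deriv (fun y => ρ s y) x ≤ 1 + ε := by
    intro s hs x hx
    have := abs_lt.1 (hgd s hs x hx)
    constructor <;> linarith
  obtain ⟨Λ, hΛ0, hΛ⟩ : ∃ Λ : ℝ, 0 ≤ Λ ∧ ∀ s ∈ S, ∀ x ∈ Set.Ioo (0:ℝ) 1, ∀ y ∈ Set.Ioo (0:ℝ) 1,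
      |Real.log (deriv (fun z => ρ s z) x) - Real.log (deriv (fun z => ρ s z) y)|
        ≤ Λ * |x - y| := by
    have hex : ∀ s : {x // x ∈ S}, ∃ L : ℝ, 0 ≤ L ∧ ∀ x ∈ Set.Ioo (0:ℝ) 1,
        ∀ y ∈ Set.Ioo (0:ℝ) 1,
        |Real.log (deriv (fun z => ρ s.1 z) x) - Real.log (deriv (fun z => ρ s.1 z) y)|
          ≤ L * |x - y| := by
      intro s
      apply sd_exists_lip (Hall s.1).1
      intro x hx
      have := (hglow s.1 s.2 x hx).1
      have h8 : ε ≤ 1/8 := hε8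
      linarith
    choose L hL0 hL using hex
    rcases S.eq_empty_or_nonempty with he | hne
    · refine ⟨0, le_rfl, fun s hs => ?_⟩
      rw [he] at hs
      exact absurd hs (Finset.notMem_empty s)
    · have hna : S.attach.Nonempty := Finset.attach_nonempty_iff.mpr hne
      refine ⟨(S.attach.image L).max' (hna.image L), ?_, fun s hs x hx y hy => ?_⟩
      · obtain ⟨s0, hs0⟩ := hna
        exact le_trans (hL0 s0) (Finset.le_max' _ _ (Finset.mem_image_of_mem L (Finset.mem_attach _ s0)))
      · refine le_trans (hL ⟨s, hs⟩ x hx y hy) (mul_le_mul_of_nonneg_right ?_ (abs_nonneg _))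
        exact Finset.le_max' _ _ (Finset.mem_image_of_mem L (Finset.mem_attach _ ⟨s, hs⟩))
  have hmul : ∀ g h : Γ, (fun y => ρ (g * h) y) = (fun y => ρ g (ρ h y)) := by
    intro g h; funext y; rw [map_mul, Equiv.Perm.mul_apply]
  have hone : (fun y => ρ (1:Γ) y) = fun y => y := by
    funext y; rw [map_one, Equiv.Perm.one_apply]
  -- chain rule along a word
  have hchain : ∀ (g h : Γ), ∀ x ∈ Set.Ioo (0:ℝ) 1,
      deriv (fun y => ρ (g * h) y) x
        = deriv (fun y => ρ g y) (ρ h x) * deriv (fun y => ρ h y) x := by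
    intro g h x hx
    have hx' : ρ h x ∈ Set.Ioo (0:ℝ) 1 := hmapJ h hx
    have hcomp : HasDerivAt (fun y => ρ (g * h) y)
        (deriv (fun y => ρ g y) (ρ h x) * deriv (fun y => ρ h y) x) x := by
      rw [hmul]
      exact HasDerivAt.comp (𝕜 := ℝ) (𝕜' := ℝ) (h₂ := fun y => ρ g y)
        (h := fun y => ρ h y) (x := x) (hDa g (ρ h x) hx') (hDa h x hx)
    exact hcomp.deriv
  -- word lemma (b): derivative bounds
  have hWb : ∀ l : List Γ, (∀ s ∈ l, s ∈ S) → ∀ x ∈ Set.Ioo (0:ℝ) 1,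
      (1 - ε) ^ l.length ≤ deriv (fun y => ρ l.prod y) x ∧
       deriv (fun y => ρ l.prod y) x ≤ (1 + ε) ^ l.length := by
    intro l
    induction l with
    | nil =>
      intro _ x hx
      simp only [List.prod_nil, List.length_nil, pow_zero]
      rw [hone, deriv_id'']
      norm_num
    | cons s t ih =>
      intro hmem x hx
      have hs : s ∈ S := hmem s (List.mem_cons_self)
      have hts : ∀ a ∈ t, a ∈ S := fun a ha => hmem a (List.mem_cons_of_mem s ha)
      have hx' : ρ t.prod x ∈ Set.Ioo (0:ℝ) 1 := hmapJ t.prod hx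
      have hder := hchain s t.prod x hx
      have hb1 := ih hts x hx
      have hb2 := hglow s hs (ρ t.prod x) hx'
      have hpos1 : (0:ℝ) < (1 - ε) ^ t.length := pow_pos (by linarith) _
      have h1ε : (0:ℝ) ≤ 1 - ε := by linarith
      have h1ε' : (0:ℝ) ≤ 1 + ε := by linarith
      rw [List.prod_cons, List.length_cons, pow_succ, pow_succ]
      rw [hder]
      constructor
      · nlinarith [hb1.1, hb1.2, hb2.1, hb2.2]
      · nlinarith [hb1.1, hb1.2, hb2.1, hb2.2, pow_nonneg h1ε t.length,
          pow_nonneg h1ε' t.length]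
  -- word lemma (a): displacement bounds
  have hWa : ∀ l : List Γ, (∀ s ∈ l, s ∈ S) → ∀ x ∈ Set.Ioo (0:ℝ) 1,
      |ρ l.prod x - x| ≤ l.length * ε := by
    intro l
    induction l with
    | nil =>
      intro _ x hx
      simp [map_one]
    | cons s t ih =>
      intro hmem x hx
      have hs : s ∈ S := hmem s (List.mem_cons_self)
      have hts : ∀ a ∈ t, a ∈ S := fun a ha => hmem a (List.mem_cons_of_mem s ha)
      have hx' : ρ t.prod x ∈ Set.Ioo (0:ℝ) 1 := hmapJ t.prod hx
      have hxI' : ρ t.prod x ∈ Set.Icc (0:ℝ) 1 := ⟨le_of_lt hx'.1, le_of_lt hx'.2⟩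
      have h1 : |ρ s (ρ t.prod x) - ρ t.prod x| < ε := hgm s hs _ hxI'
      have h2 := ih hts x hx
      have heq : ρ (s :: t).prod x = ρ s (ρ t.prod x) := by
        rw [List.prod_cons, map_mul, Equiv.Perm.mul_apply]
      rw [heq, List.length_cons]
      have htri := abs_sub_le (ρ s (ρ t.prod x)) (ρ t.prod x) x
      push_cast
      linarith
  -- word maps are Lipschitz on (0,1)
  have hWlip : ∀ l : List Γ, (∀ s ∈ l, s ∈ S) → ∀ x ∈ Set.Ioo (0:ℝ) 1, ∀ y ∈ Set.Ioo (0:ℝ) 1,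
      |ρ l.prod x - ρ l.prod y| ≤ (1 + ε) ^ l.length * |x - y| := by
    intro l hmem x hx y hy
    have hbound : ∀ z ∈ Set.Ioo (0:ℝ) 1,
        ‖deriv (fun w => ρ l.prod w) z‖ ≤ (1 + ε) ^ l.length := by
      intro z hz
      have hb := hWb l hmem z hz
      have hpos : (0:ℝ) < (1 - ε) ^ l.length := pow_pos (by linarith) _
      rw [Real.norm_eq_abs, abs_of_pos (lt_of_lt_of_le hpos hb.1)]
      exact hb.2
    have hmvt := (convex_Ioo (0:ℝ) 1).norm_image_sub_le_of_norm_hasDerivWithin_le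
      (fun z hz => (hDa l.prod z hz).hasDerivWithinAt) hbound hy hx
    rw [Real.norm_eq_abs, Real.norm_eq_abs] at hmvt
    exact hmvt
  -- word lemma (c): Lipschitz bound on log-derivative
  have hWc : ∀ l : List Γ, (∀ s ∈ l, s ∈ S) → ∀ x ∈ Set.Ioo (0:ℝ) 1, ∀ y ∈ Set.Ioo (0:ℝ) 1,
      |Real.log (deriv (fun w => ρ l.prod w) x) - Real.log (deriv (fun w => ρ l.prod w) y)|
        ≤ l.length * Λ * (1 + ε) ^ l.length * |x - y| := by
    intro l
    induction l with
    | nil =>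
      intro _ x hx y hy
      simp [hone, deriv_id'']
    | cons s t ih =>
      intro hmem x hx y hy
      have hs : s ∈ S := hmem s (List.mem_cons_self)
      have hts : ∀ a ∈ t, a ∈ S := fun a ha => hmem a (List.mem_cons_of_mem s ha)
      have hx' : ρ t.prod x ∈ Set.Ioo (0:ℝ) 1 := hmapJ t.prod hx
      have hy' : ρ t.prod y ∈ Set.Ioo (0:ℝ) 1 := hmapJ t.prod hy
      have hdx := hchain s t.prod x hx
      have hdy := hchain s t.prod y hy
      have hpow : (0:ℝ) < (1 - ε) ^ t.length := pow_pos (by linarith) _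
      have hposx : (0:ℝ) < deriv (fun w => ρ t.prod w) x :=
        lt_of_lt_of_le hpow (hWb t hts x hx).1
      have hposy : (0:ℝ) < deriv (fun w => ρ t.prod w) y :=
        lt_of_lt_of_le hpow (hWb t hts y hy).1
      have hposs_x : (0:ℝ) < deriv (fun w => ρ s w) (ρ t.prod x) := by
        have := (hglow s hs _ hx').1; linarith
      have hposs_y : (0:ℝ) < deriv (fun w => ρ s w) (ρ t.prod y) := by
        have := (hglow s hs _ hy').1; linarith
      rw [List.prod_cons, List.length_cons]
      rw [hdx, hdy, Real.log_mul hposs_x.ne' hposx.ne', Real.log_mul hposs_y.ne' hposy.ne']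
      have h1 : |Real.log (deriv (fun w => ρ s w) (ρ t.prod x))
          - Real.log (deriv (fun w => ρ s w) (ρ t.prod y))|
          ≤ Λ * |ρ t.prod x - ρ t.prod y| := hΛ s hs _ hx' _ hy'
      have h2 : |ρ t.prod x - ρ t.prod y| ≤ (1 + ε) ^ t.length * |x - y| :=
        hWlip t hts x hx y hy
      have h3 := ih hts x hx y hy
      have htri : |Real.log (deriv (fun w => ρ s w) (ρ t.prod x))
            + Real.log (deriv (fun w => ρ t.prod w) x)
            - (Real.log (deriv (fun w => ρ s w) (ρ t.prod y))
            + Real.log (deriv (fun w => ρ t.prod w) y))|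
          ≤ |Real.log (deriv (fun w => ρ s w) (ρ t.prod x))
            - Real.log (deriv (fun w => ρ s w) (ρ t.prod y))|
            + |Real.log (deriv (fun w => ρ t.prod w) x)
            - Real.log (deriv (fun w => ρ t.prod w) y)| := by
        rw [add_sub_add_comm]
        exact abs_add_le _ _
      have hmono : ((1:ℝ) + ε) ^ t.length ≤ (1 + ε) ^ (t.length + 1) :=
        pow_le_pow_right₀ (by linarith) (Nat.le_succ _)
      have hxy : (0:ℝ) ≤ |x - y| := abs_nonneg _
      have hΛb : Λ * |ρ t.prod x - ρ t.prod y| ≤ Λ * ((1 + ε) ^ t.length * |x - y|) :=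
        mul_le_mul_of_nonneg_left h2 hΛ0
      have hfin : Λ * ((1 + ε) ^ t.length * |x - y|)
            + (t.length : ℝ) * Λ * (1 + ε) ^ t.length * |x - y|
          ≤ ((t.length : ℝ) + 1) * Λ * (1 + ε) ^ (t.length + 1) * |x - y| := by
        have e1 : Λ * ((1 + ε) ^ t.length * |x - y|)
              + (t.length : ℝ) * Λ * (1 + ε) ^ t.length * |x - y|
            = ((t.length : ℝ) + 1) * Λ * (1 + ε) ^ t.length * |x - y| := by ring
        rw [e1]
        have : ((t.length : ℝ) + 1) * Λ ≥ 0 := by positivity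
        nlinarith [mul_le_mul_of_nonneg_left hmono this]
      push_cast
      calc _ ≤ _ := htri
        _ ≤ Λ * ((1 + ε) ^ t.length * |x - y|)
            + (t.length : ℝ) * Λ * (1 + ε) ^ t.length * |x - y| := by linarith
        _ ≤ ((t.length : ℝ) + 1) * Λ * (1 + ε) ^ (t.length + 1) * |x - y| := hfin
  -- wordBall facts
  have hWinv : ∀ n : ℕ, ∀ g : Γ, g ∈ wordBall S n → g⁻¹ ∈ wordBall S n := by
    rintro n g ⟨l, hlen, hmem, hprod⟩
    refine ⟨(l.map fun x => x⁻¹).reverse, ?_, ?_, ?_⟩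
    · rw [List.length_reverse, List.length_map]; exact hlen
    · intro s hsm
      rw [List.mem_reverse, List.mem_map] at hsm
      obtain ⟨a, ha, rfl⟩ := hsm
      exact hsym a (hmem a ha)
    · rw [← List.prod_inv_reverse, hprod]
  have hWfin : ∀ n : ℕ, (wordBall S n).Finite := by
    intro n
    induction n with
    | zero =>
      apply Set.Finite.subset (Set.finite_singleton (1:Γ))
      rintro g ⟨l, hlen, hmem, hprod⟩
      have hl : l = [] := List.eq_nil_of_length_eq_zero (Nat.le_zero.mp hlen)
      rw [hl] at hprod
      simp [← hprod]
    | succ n ih =>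
      apply Set.Finite.subset
        (Set.Finite.insert 1 (Set.Finite.biUnion S.finite_toSet
          (fun s _ => ih.image (fun g => s * g))))
      rintro g ⟨l, hlen, hmem, hprod⟩
      cases l with
      | nil =>
        simp only [List.prod_nil] at hprod
        rw [← hprod]
        exact Set.mem_insert _ _
      | cons s t =>
        refine Set.mem_insert_iff.mpr (Or.inr ?_)
        refine Set.mem_biUnion (hmem s (List.mem_cons_self)) ?_
        refine ⟨t.prod, ⟨t, ?_, fun a ha => hmem a (List.mem_cons_of_mem s ha), rfl⟩, ?_⟩
        · exact Nat.succ_le_succ_iff.mp hlen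
        · rw [← hprod, List.prod_cons]
  -- bounds for elements of the ball
  have hball : ∀ n : ℕ, ∀ g ∈ wordBall S n,
      |ρ g x₀ - x₀| ≤ n * ε ∧
      (1 - ε) ^ n ≤ deriv (fun y => ρ g y) x₀ ∧
      deriv (fun y => ρ g y) x₀ ≤ (1 + ε) ^ n ∧
      |Real.log (deriv (fun y => ρ g y) x₀)| ≤ n := by
    rintro n g ⟨l, hlen, hmem, hprod⟩
    have ha := hWa l hmem x₀ hx₀
    have hb := hWb l hmem x₀ hx₀
    rw [hprod] at ha hb
    have h1 : |ρ g x₀ - x₀| ≤ n * ε := by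
      refine le_trans ha ?_
      have hc : (l.length : ℝ) ≤ n := Nat.cast_le.mpr hlen
      exact mul_le_mul_of_nonneg_right hc (le_of_lt hεpos)
    have hlow : ((1:ℝ) - ε) ^ n ≤ (1 - ε) ^ l.length :=
      pow_le_pow_of_le_one (by linarith) (by linarith) hlen
    have hhigh : ((1:ℝ) + ε) ^ l.length ≤ (1 + ε) ^ n :=
      pow_le_pow_right₀ (by linarith) hlen
    have h2 : (1 - ε) ^ n ≤ deriv (fun y => ρ g y) x₀ := le_trans hlow hb.1
    have h3 : deriv (fun y => ρ g y) x₀ ≤ (1 + ε) ^ n := le_trans hb.2 hhigh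
    have hdpos : (0:ℝ) < deriv (fun y => ρ g y) x₀ :=
      lt_of_lt_of_le (pow_pos (by linarith) n) h2
    have h4 : |Real.log (deriv (fun y => ρ g y) x₀)| ≤ n := by
      have hup : Real.log (deriv (fun y => ρ g y) x₀) ≤ n * Real.log (1 + ε) := by
        rw [← Real.log_pow]
        exact Real.log_le_log hdpos h3
      have hdn : (n : ℝ) * Real.log (1 - ε) ≤ Real.log (deriv (fun y => ρ g y) x₀) := by
        rw [← Real.log_pow]
        exact Real.log_le_log (pow_pos (by linarith) n) h2
      have hl1 : |Real.log (1 + ε)| ≤ 2 * ε := by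
        have := sd_log_lip (a := 1 + ε) (b := 1) (by linarith) (by norm_num)
        simpa [abs_of_pos hεpos] using this
      have hl2 : |Real.log (1 - ε)| ≤ 2 * ε := by
        have := sd_log_lip (a := 1 - ε) (b := 1) (by linarith) (by norm_num)
        have he : |1 - ε - 1| = ε := by rw [abs_of_nonpos (by linarith)]; ring
        simpa [he, abs_of_pos hεpos] using this
      have habs1 := abs_le.1 hl1
      have habs2 := abs_le.1 hl2
      rw [abs_le]
      have hn0 : (0:ℝ) ≤ n := Nat.cast_nonneg n
      have k1 : (n:ℝ) * Real.log (1 + ε) ≤ n * (2*ε) := mul_le_mul_of_nonneg_left habs1.2 hn0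
      have k2 : (n:ℝ) * (2*ε) ≤ n * 1 := mul_le_mul_of_nonneg_left (by linarith) hn0
      have k3 : (n:ℝ) * (-(2*ε)) ≤ n * Real.log (1 - ε) := mul_le_mul_of_nonneg_left (by linarith) hn0
      have k4 : ((n:ℝ)) * (-(2*ε)) = -((n:ℝ) * (2*ε)) := by ring
      constructor
      · rw [k4] at k3; linarith
      · linarith
    exact ⟨h1, h2, h3, h4⟩
  -- the separation estimate
  have hsep : ∀ n : ℕ, ∀ g ∈ wordBall S n, ∀ h ∈ wordBall S n, g ≠ h →
      Real.log (1 + C) ≤ ((n:ℝ) * Λ * (1 + ε) ^ n + 1) * |ρ g x₀ - ρ h x₀|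
        + |Real.log (deriv (fun y => ρ g y) x₀) - Real.log (deriv (fun y => ρ h y) x₀)| := by
    intro n g hg h hh hgh
    obtain ⟨li, hlile, hlimem, hliprod⟩ := hWinv n h hh
    have hugJ : ρ g x₀ ∈ Set.Ioo (0:ℝ) 1 := hmapJ g hx₀
    have huhJ : ρ h x₀ ∈ Set.Ioo (0:ℝ) 1 := hmapJ h hx₀
    have hpow : (0:ℝ) < (1 - ε) ^ li.length := pow_pos (by linarith) _
    have hbug := hWb li hlimem _ hugJ
    have hbuh := hWb li hlimem _ huhJ
    rw [hliprod] at hbug hbuh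
    have hAug : (0:ℝ) < deriv (fun y => ρ h⁻¹ y) (ρ g x₀) := lt_of_lt_of_le hpow hbug.1
    have hAuh : (0:ℝ) < deriv (fun y => ρ h⁻¹ y) (ρ h x₀) := lt_of_lt_of_le hpow hbuh.1
    have hBg : (0:ℝ) < deriv (fun y => ρ g y) x₀ :=
      lt_of_lt_of_le (pow_pos (by linarith) n) (hball n g hg).2.1
    have hBh : (0:ℝ) < deriv (fun y => ρ h y) x₀ :=
      lt_of_lt_of_le (pow_pos (by linarith) n) (hball n h hh).2.1
    have hA := hchain h⁻¹ g x₀ hx₀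
    have hB := hchain h⁻¹ h x₀ hx₀
    have hBone : deriv (fun y => ρ (h⁻¹ * h) y) x₀ = 1 := by
      rw [inv_mul_cancel, hone, deriv_id'']
    have hmul1 : deriv (fun y => ρ h⁻¹ y) (ρ h x₀) * deriv (fun y => ρ h y) x₀ = 1 :=
      hB.symm.trans hBone
    have hlogsum : Real.log (deriv (fun y => ρ h⁻¹ y) (ρ h x₀))
        + Real.log (deriv (fun y => ρ h y) x₀) = 0 := by
      rw [← Real.log_mul hAuh.ne' hBh.ne', hmul1, Real.log_one]
    have hfne : h⁻¹ * g ≠ 1 := by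
      intro e
      exact hgh (inv_mul_eq_one.mp e).symm
    have hCf : C < |deriv (fun y => ρ h⁻¹ y) (ρ g x₀) * deriv (fun y => ρ g y) x₀ - 1| := by
      have := hcon _ hfne
      rwa [hA] at this
    have hdfpos : (0:ℝ) < deriv (fun y => ρ h⁻¹ y) (ρ g x₀) * deriv (fun y => ρ g y) x₀ :=
      mul_pos hAug hBg
    have hlogAB : Real.log (1 + C)
        ≤ |Real.log (deriv (fun y => ρ h⁻¹ y) (ρ g x₀) * deriv (fun y => ρ g y) x₀)| := by
      rcases lt_abs.1 hCf with hcase | hcase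
      · refine le_trans (Real.log_le_log (by linarith) (by linarith)) (le_abs_self _)
      · have hClt1 : C < 1 := by nlinarith
        have l1 : Real.log (deriv (fun y => ρ h⁻¹ y) (ρ g x₀) * deriv (fun y => ρ g y) x₀)
            ≤ Real.log (1 - C) := Real.log_le_log hdfpos (by linarith)
        have l2 : Real.log (1 + C) + Real.log (1 - C) ≤ 0 := by
          rw [← Real.log_mul (by linarith) (by linarith)]
          exact Real.log_nonpos (by nlinarith) (by nlinarith)
        have l3 : Real.log (1 + C)
            ≤ -Real.log (deriv (fun y => ρ h⁻¹ y) (ρ g x₀) * deriv (fun y => ρ g y) x₀) := by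
          linarith
        exact le_trans l3 (neg_le_abs _)
    have hdecomp : Real.log (deriv (fun y => ρ h⁻¹ y) (ρ g x₀) * deriv (fun y => ρ g y) x₀)
        = (Real.log (deriv (fun y => ρ h⁻¹ y) (ρ g x₀))
            - Real.log (deriv (fun y => ρ h⁻¹ y) (ρ h x₀)))
          + (Real.log (deriv (fun y => ρ g y) x₀)
            - Real.log (deriv (fun y => ρ h y) x₀)) := by
      rw [Real.log_mul hAug.ne' hBg.ne']
      linarith
    have htri : |Real.log (deriv (fun y => ρ h⁻¹ y) (ρ g x₀) * deriv (fun y => ρ g y) x₀)|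
        ≤ |Real.log (deriv (fun y => ρ h⁻¹ y) (ρ g x₀))
            - Real.log (deriv (fun y => ρ h⁻¹ y) (ρ h x₀))|
          + |Real.log (deriv (fun y => ρ g y) x₀)
            - Real.log (deriv (fun y => ρ h y) x₀)| := by
      rw [hdecomp]
      exact abs_add_le _ _
    have hlipA : |Real.log (deriv (fun y => ρ h⁻¹ y) (ρ g x₀))
          - Real.log (deriv (fun y => ρ h⁻¹ y) (ρ h x₀))|
        ≤ (li.length : ℝ) * Λ * (1 + ε) ^ li.length * |ρ g x₀ - ρ h x₀| := by
      have := hWc li hlimem _ hugJ _ huhJ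
      rwa [hliprod] at this
    have hcoef : (li.length : ℝ) * Λ * (1 + ε) ^ li.length ≤ (n:ℝ) * Λ * (1 + ε) ^ n := by
      have c0 : (li.length : ℝ) ≤ n := Nat.cast_le.mpr hlile
      have c1 : (li.length : ℝ) * Λ ≤ (n:ℝ) * Λ := mul_le_mul_of_nonneg_right c0 hΛ0
      have c2 : ((1:ℝ) + ε) ^ li.length ≤ (1 + ε) ^ n := pow_le_pow_right₀ (by linarith) hlile
      have c3 : (0:ℝ) ≤ (li.length : ℝ) * Λ := by positivity
      have c4 : (0:ℝ) ≤ ((1:ℝ) + ε) ^ li.length := by positivity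
      exact mul_le_mul c1 c2 c4 (by positivity)
    have hlipA' : |Real.log (deriv (fun y => ρ h⁻¹ y) (ρ g x₀))
          - Real.log (deriv (fun y => ρ h⁻¹ y) (ρ h x₀))|
        ≤ ((n:ℝ) * Λ * (1 + ε) ^ n + 1) * |ρ g x₀ - ρ h x₀| := by
      refine le_trans hlipA (mul_le_mul_of_nonneg_right ?_ (abs_nonneg _))
      linarith
    linarith
  -- counting: the ball injects into a grid
  have hc₀ : 0 < Real.log (1 + C) := Real.log_pos (by linarith)
  have hcard : ∀ n : ℕ, ((wordBall S n).ncard : ℝ)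
      ≤ (4*(n:ℝ)*ε*((n:ℝ)*Λ*(1+ε)^n + 1)/Real.log (1 + C) + 2)
        * (4*(n:ℝ)/Real.log (1 + C) + 2) := by
    intro n
    set c₀ : ℝ := Real.log (1 + C) with hc₀def
    set Λn : ℝ := (n:ℝ)*Λ*(1+ε)^n + 1 with hΛndef
    have hΛn1 : 1 ≤ Λn := by
      have : (0:ℝ) ≤ (n:ℝ)*Λ*(1+ε)^n := by positivity
      rw [hΛndef]; linarith
    have hΛnpos : (0:ℝ) < Λn := by linarith
    set a : ℝ := c₀ / (2*Λn) with hadef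
    set b : ℝ := c₀ / 2 with hbdef
    have hapos : 0 < a := div_pos hc₀ (by linarith)
    have hbpos : 0 < b := div_pos hc₀ (by norm_num)
    have heΛa : Λn * a = c₀ / 2 := by
      rw [hadef]; field_simp
    have hinj2 : Set.InjOn
        (fun g => (⌊ρ g x₀ / a⌋, ⌊Real.log (deriv (fun y => ρ g y) x₀) / b⌋))
        (wordBall S n) := by
      intro g hg h hh he
      by_contra hne
      have h1 : ⌊ρ g x₀ / a⌋ = ⌊ρ h x₀ / a⌋ := congrArg Prod.fst he
      have h2 : ⌊Real.log (deriv (fun y => ρ g y) x₀) / b⌋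
          = ⌊Real.log (deriv (fun y => ρ h y) x₀) / b⌋ := congrArg Prod.snd he
      have hu : |ρ g x₀ - ρ h x₀| < a := by
        have l1 : (⌊ρ g x₀ / a⌋ : ℝ) ≤ ρ g x₀ / a := Int.floor_le _
        have l2 : ρ g x₀ / a < ⌊ρ g x₀ / a⌋ + 1 := Int.lt_floor_add_one _
        have l3 : (⌊ρ h x₀ / a⌋ : ℝ) ≤ ρ h x₀ / a := Int.floor_le _
        have l4 : ρ h x₀ / a < ⌊ρ h x₀ / a⌋ + 1 := Int.lt_floor_add_one _
        rw [h1] at l1 l2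
        have hdiv : |ρ g x₀ / a - ρ h x₀ / a| < 1 := abs_lt.2 ⟨by linarith, by linarith⟩
        have e : ρ g x₀ - ρ h x₀ = (ρ g x₀ / a - ρ h x₀ / a) * a := by
          field_simp
        rw [e, abs_mul, abs_of_pos hapos]
        calc |ρ g x₀ / a - ρ h x₀ / a| * a < 1 * a :=
              mul_lt_mul_of_pos_right hdiv hapos
          _ = a := one_mul a
      have hv : |Real.log (deriv (fun y => ρ g y) x₀)
          - Real.log (deriv (fun y => ρ h y) x₀)| < b := by
        have l1 : (⌊Real.log (deriv (fun y => ρ g y) x₀) / b⌋ : ℝ)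
            ≤ Real.log (deriv (fun y => ρ g y) x₀) / b := Int.floor_le _
        have l2 : Real.log (deriv (fun y => ρ g y) x₀) / b
            < ⌊Real.log (deriv (fun y => ρ g y) x₀) / b⌋ + 1 := Int.lt_floor_add_one _
        have l3 : (⌊Real.log (deriv (fun y => ρ h y) x₀) / b⌋ : ℝ)
            ≤ Real.log (deriv (fun y => ρ h y) x₀) / b := Int.floor_le _
        have l4 : Real.log (deriv (fun y => ρ h y) x₀) / b
            < ⌊Real.log (deriv (fun y => ρ h y) x₀) / b⌋ + 1 := Int.lt_floor_add_one _
        rw [h2] at l1 l2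
        have hdiv : |Real.log (deriv (fun y => ρ g y) x₀) / b
            - Real.log (deriv (fun y => ρ h y) x₀) / b| < 1 := abs_lt.2 ⟨by linarith, by linarith⟩
        have e : Real.log (deriv (fun y => ρ g y) x₀)
              - Real.log (deriv (fun y => ρ h y) x₀)
            = (Real.log (deriv (fun y => ρ g y) x₀) / b
              - Real.log (deriv (fun y => ρ h y) x₀) / b) * b := by
          field_simp
        rw [e, abs_mul, abs_of_pos hbpos]
        calc _ < 1 * b := mul_lt_mul_of_pos_right hdiv hbpos
          _ = b := one_mul b
      have hs := hsep n g hg h hh hne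
      have hmul : Λn * |ρ g x₀ - ρ h x₀| < Λn * a := mul_lt_mul_of_pos_left hu hΛnpos
      rw [heΛa] at hmul
      rw [← hΛndef] at hs
      rw [hbdef] at hv
      have hcomb := hs.trans_lt (add_lt_add hmul hv)
      linarith
    have hsub : ∀ g ∈ wordBall S n,
        (fun g => (⌊ρ g x₀ / a⌋, ⌊Real.log (deriv (fun y => ρ g y) x₀) / b⌋)) g
          ∈ ((Finset.Icc ⌊(x₀ - n*ε)/a⌋ ⌊(x₀ + n*ε)/a⌋ ×ˢ
              Finset.Icc ⌊(-(n:ℝ))/b⌋ ⌊(n:ℝ)/b⌋ : Finset (ℤ × ℤ)) : Set (ℤ × ℤ)) := by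
      intro g hg
      obtain ⟨hb1, _, _, hb4⟩ := hball n g hg
      have hu1 : x₀ - n*ε ≤ ρ g x₀ := by
        have := abs_le.1 hb1; linarith [this.1]
      have hu2 : ρ g x₀ ≤ x₀ + n*ε := by
        have := abs_le.1 hb1; linarith [this.2]
      have hv1 : -(n:ℝ) ≤ Real.log (deriv (fun y => ρ g y) x₀) := (abs_le.1 hb4).1
      have hv2 : Real.log (deriv (fun y => ρ g y) x₀) ≤ (n:ℝ) := (abs_le.1 hb4).2
      simp only [Finset.coe_product, Set.mem_prod, Finset.mem_coe, Finset.mem_Icc]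
      constructor
      · exact ⟨Int.floor_le_floor (by gcongr), Int.floor_le_floor (by gcongr)⟩
      · exact ⟨Int.floor_le_floor (by gcongr), Int.floor_le_floor (by gcongr)⟩
    have hle : (wordBall S n).ncard
        ≤ ((Finset.Icc ⌊(x₀ - n*ε)/a⌋ ⌊(x₀ + n*ε)/a⌋ ×ˢ
            Finset.Icc ⌊(-(n:ℝ))/b⌋ ⌊(n:ℝ)/b⌋ : Finset (ℤ × ℤ)) : Set (ℤ × ℤ)).ncard :=
      Set.ncard_le_ncard_of_injOn _ hsub hinj2 (Finset.finite_toSet _)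
    rw [Set.ncard_coe_finset, Finset.card_product] at hle
    have hcast1 : ((Finset.Icc ⌊(x₀ - (n:ℝ)*ε)/a⌋ ⌊(x₀ + (n:ℝ)*ε)/a⌋).card : ℝ)
        ≤ 2*(n:ℝ)*ε/a + 2 := by
      rw [Int.card_Icc]
      have hnonneg : (0:ℝ) ≤ 2*(n:ℝ)*ε/a + 2 := by
        have : (0:ℝ) ≤ 2*(n:ℝ)*ε/a := div_nonneg (by positivity) hapos.le
        linarith
      apply sd_toNat_le ?_ hnonneg
      push_cast
      have f1 : (⌊(x₀ + (n:ℝ)*ε)/a⌋ : ℝ) ≤ (x₀ + (n:ℝ)*ε)/a := Int.floor_le _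
      have f2 : (x₀ - (n:ℝ)*ε)/a - 1 < (⌊(x₀ - (n:ℝ)*ε)/a⌋ : ℝ) := by
        have := Int.lt_floor_add_one ((x₀ - (n:ℝ)*ε)/a); linarith
      have e : (x₀ + (n:ℝ)*ε)/a - ((x₀ - (n:ℝ)*ε)/a) = 2*(n:ℝ)*ε/a := by
        field_simp; ring
      linarith
    have hcast2 : ((Finset.Icc ⌊(-(n:ℝ))/b⌋ ⌊(n:ℝ)/b⌋).card : ℝ) ≤ 2*(n:ℝ)/b + 2 := by
      rw [Int.card_Icc]
      have hnonneg : (0:ℝ) ≤ 2*(n:ℝ)/b + 2 := by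
        have : (0:ℝ) ≤ 2*(n:ℝ)/b := div_nonneg (by positivity) hbpos.le
        linarith
      apply sd_toNat_le ?_ hnonneg
      push_cast
      have f1 : (⌊(n:ℝ)/b⌋ : ℝ) ≤ (n:ℝ)/b := Int.floor_le _
      have f2 : (-(n:ℝ))/b - 1 < (⌊(-(n:ℝ))/b⌋ : ℝ) := by
        have := Int.lt_floor_add_one ((-(n:ℝ))/b); linarith
      have e : (n:ℝ)/b - ((-(n:ℝ))/b) = 2*(n:ℝ)/b := by field_simp; ring
      linarith
    have hc : ((wordBall S n).ncard : ℝ)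
        ≤ ((Finset.Icc ⌊(x₀ - (n:ℝ)*ε)/a⌋ ⌊(x₀ + (n:ℝ)*ε)/a⌋).card : ℝ)
          * ((Finset.Icc ⌊(-(n:ℝ))/b⌋ ⌊(n:ℝ)/b⌋).card : ℝ) := by
      exact_mod_cast hle
    have hb2nn : (0:ℝ) ≤ 2*(n:ℝ)*ε/a + 2 := by
      have : (0:ℝ) ≤ 2*(n:ℝ)*ε/a := div_nonneg (by positivity) hapos.le
      linarith
    have hnn : ((wordBall S n).ncard : ℝ) ≤ (2*(n:ℝ)*ε/a + 2) * (2*(n:ℝ)/b + 2) :=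
      le_trans hc (mul_le_mul hcast1 hcast2 (Nat.cast_nonneg _) hb2nn)
    have ea : 2*(n:ℝ)*ε/a = 4*(n:ℝ)*ε*Λn/c₀ := by
      rw [hadef]; field_simp; ring
    have eb : 2*(n:ℝ)/b = 4*(n:ℝ)/c₀ := by
      rw [hbdef]; field_simp; ring
    rw [ea, eb] at hnn
    exact hnn
  -- final asymptotic contradiction
  obtain ⟨N, hN⟩ := hgrowth S hsym hgen ((1+ω)/2) (by linarith) (by linarith)
  have hβc : (1:ℝ) + ε < (1+ω)/2 := by linarith
  have hβpos : (0:ℝ) < 1 + ε := by linarith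
  have hr : 1 < ((1+ω)/2) / (1+ε) := (one_lt_div hβpos).2 hβc
  have hrpos : (0:ℝ) < ((1+ω)/2) / (1+ε) := lt_trans one_pos hr
  set K₁ : ℝ := (4*Λ + 4)/Real.log (1+C) + 2 with hK₁def
  set K₂ : ℝ := 4/Real.log (1+C) + 2 with hK₂def
  have hK₁pos : 0 < K₁ := by
    have : 0 ≤ (4*Λ+4)/Real.log (1+C) := div_nonneg (by linarith) hc₀.le
    rw [hK₁def]; linarith
  have hK₂pos : 0 < K₂ := by
    have : 0 ≤ (4:ℝ)/Real.log (1+C) := div_nonneg (by norm_num) hc₀.le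
    rw [hK₂def]; linarith
  have hKpos : 0 < K₁ * K₂ := mul_pos hK₁pos hK₂pos
  have hbound : ∀ n : ℕ, ((wordBall S n).ncard : ℝ)
      ≤ K₁ * K₂ * ((n:ℝ)+1)^3 * (1+ε)^n := by
    intro n
    have hpow1 : (1:ℝ) ≤ (1+ε)^n := one_le_pow₀ (by linarith)
    have hm0 : (0:ℝ) ≤ (n:ℝ) := Nat.cast_nonneg n
    have hpownn : (0:ℝ) ≤ (1+ε)^n := by linarith
    have hsq1 : (1:ℝ) ≤ ((n:ℝ)+1)^2 := by nlinarith
    have hXY1 : (1:ℝ) ≤ ((n:ℝ)+1)^2 * (1+ε)^n := by nlinarith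
    have h1 : 4*(n:ℝ)*ε*((n:ℝ)*Λ*(1+ε)^n + 1)/Real.log (1+C) + 2
        ≤ K₁ * (((n:ℝ)+1)^2 * (1+ε)^n) := by
      have s1 : 4*(n:ℝ)*ε*((n:ℝ)*Λ*(1+ε)^n + 1) ≤ 4*(n:ℝ)*((n:ℝ)*Λ*(1+ε)^n + 1) := by
        have hx : (0:ℝ) ≤ (n:ℝ)*Λ*(1+ε)^n + 1 := by positivity
        nlinarith [mul_nonneg hm0 hx]
      have s2 : 4*(n:ℝ)*((n:ℝ)*Λ*(1+ε)^n + 1) ≤ (4*Λ+4) * (((n:ℝ)+1)^2 * (1+ε)^n) := by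
        have hmm : (0:ℝ) ≤ Λ * ((n:ℝ) * (n:ℝ)) := mul_nonneg hΛ0 (mul_nonneg hm0 hm0)
        nlinarith [mul_le_mul_of_nonneg_left hpow1 hmm, mul_le_mul_of_nonneg_left hpow1 hΛ0,
          mul_le_mul_of_nonneg_left hpow1 hm0]
      have s12 := s1.trans s2
      have s3 : 4*(n:ℝ)*ε*((n:ℝ)*Λ*(1+ε)^n + 1)/Real.log (1+C)
          ≤ (4*Λ+4) * (((n:ℝ)+1)^2 * (1+ε)^n)/Real.log (1+C) := by
        gcongr
      have e1 : K₁ * (((n:ℝ)+1)^2 * (1+ε)^n)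
          = (4*Λ+4) * (((n:ℝ)+1)^2 * (1+ε)^n)/Real.log (1+C)
            + 2 * (((n:ℝ)+1)^2 * (1+ε)^n) := by
        rw [hK₁def]; ring
      have b2 : (2:ℝ) ≤ 2 * (((n:ℝ)+1)^2 * (1+ε)^n) := by linarith
      linarith
    have h2 : 4*(n:ℝ)/Real.log (1+C) + 2 ≤ K₂ * ((n:ℝ)+1) := by
      have t1 : 4*(n:ℝ)/Real.log (1+C) ≤ 4*((n:ℝ)+1)/Real.log (1+C) := by
        gcongr
        linarith
      have e2 : K₂ * ((n:ℝ)+1) = 4*((n:ℝ)+1)/Real.log (1+C) + 2*((n:ℝ)+1) := by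
        rw [hK₂def]; ring
      linarith
    have hlnn : (0:ℝ) ≤ 4*(n:ℝ)/Real.log (1+C) + 2 := by
      have : (0:ℝ) ≤ 4*(n:ℝ)/Real.log (1+C) := div_nonneg (by positivity) hc₀.le
      linarith
    have hrnn : (0:ℝ) ≤ K₁ * (((n:ℝ)+1)^2 * (1+ε)^n) := by positivity
    calc ((wordBall S n).ncard : ℝ)
        ≤ (4*(n:ℝ)*ε*((n:ℝ)*Λ*(1+ε)^n + 1)/Real.log (1+C) + 2)
          * (4*(n:ℝ)/Real.log (1+C) + 2) := hcard n
      _ ≤ (K₁ * (((n:ℝ)+1)^2 * (1+ε)^n)) * (K₂ * ((n:ℝ)+1)) :=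
          mul_le_mul h1 h2 hlnn hrnn
      _ = K₁ * K₂ * ((n:ℝ)+1)^3 * (1+ε)^n := by ring
  have hlo := isLittleO_pow_const_const_pow_of_one_lt (R := ℝ) 3 hr
  have hev := Asymptotics.isLittleO_iff.mp hlo
    (show (0:ℝ) < 1/(8*(K₁*K₂)) by positivity)
  obtain ⟨M, hM⟩ := Filter.eventually_atTop.1 hev
  set n : ℕ := max (max N 1) M with hndef
  have hnN : N ≤ n := le_trans (le_max_left _ _) (le_max_left _ _)
  have hn1 : 1 ≤ n := le_trans (le_max_right _ _) (le_max_left _ _)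
  have hnM : M ≤ n := le_max_right _ _
  have hgr := hN n hnN
  have hsm := hM n hnM
  rw [Real.norm_eq_abs, Real.norm_eq_abs, abs_of_nonneg (by positivity),
    abs_of_pos (pow_pos hrpos n)] at hsm
  have hn1R : (1:ℝ) ≤ (n:ℝ) := Nat.one_le_cast.mpr hn1
  have hcube : ((n:ℝ)+1)^3 ≤ 8*(n:ℝ)^3 := by
    nlinarith [mul_nonneg (mul_self_nonneg ((n:ℝ))) (sub_nonneg.mpr hn1R),
      mul_nonneg (by linarith : (0:ℝ) ≤ (n:ℝ)) (sub_nonneg.mpr hn1R)]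
  have hKn : K₁*K₂*((n:ℝ)+1)^3 ≤ (((1+ω)/2)/(1+ε))^n := by
    calc K₁*K₂*((n:ℝ)+1)^3 ≤ K₁*K₂*(8*(n:ℝ)^3) :=
          mul_le_mul_of_nonneg_left hcube hKpos.le
      _ ≤ K₁*K₂*(8*(1/(8*(K₁*K₂)) * (((1+ω)/2)/(1+ε))^n)) := by
          refine mul_le_mul_of_nonneg_left ?_ hKpos.le
          refine mul_le_mul_of_nonneg_left hsm (by norm_num)
      _ = (((1+ω)/2)/(1+ε))^n := by field_simp
  have hfinal : K₁*K₂*((n:ℝ)+1)^3*(1+ε)^n ≤ ((1+ω)/2)^n := by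
    have hβnn : (0:ℝ) ≤ (1+ε)^n := pow_nonneg hβpos.le n
    calc K₁*K₂*((n:ℝ)+1)^3*(1+ε)^n ≤ (((1+ω)/2)/(1+ε))^n * (1+ε)^n :=
          mul_le_mul_of_nonneg_right hKn hβnn
      _ = ((1+ω)/2)^n := by
          rw [div_pow, div_mul_cancel₀]
          exact pow_ne_zero n hβpos.ne'
  exact absurd ((hbound n).trans hfinal) (not_le.mpr hgr)
end
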